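/- arXiv:math/9912032 — 6 statements merged into one kernel-verified Lean document; each statement's English description precedes it below -/
import Mathlib

section
/- Given nonzero integers λ, μ, r, s, p, q with r ≠ ±s and p ≠ ±q satisfying 2(p² - q²)pqμ² = (r² - s²)rsλ², the values a = λ(r² - s²), b = 2rsλ, c = λ(r² + s²), e = μ(p² - q² - 2pq), f = μ(p² - q² + 2pq), d = μ(p² + q²) satisfy a² + b² = c², d² = e² + ab, and f² = d² + ab, with a, b, c, d, e, f all nonzero. -/
private lemma aux_descent : ∀ n : ℕ, ∀ x y : ℤ, x.natAbs = n → x ^ 2 = 2 * y ^ 2 → y = 0 := by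
  intro n
  induction n using Nat.strong_induction_on with
  | _ n ih =>
    intro x y hxn h
    rcases eq_or_ne x 0 with hx | hx
    · subst hx
      have : y ^ 2 = 0 := by linarith [sq_nonneg y]
      exact pow_eq_zero_iff (n := 2) (by norm_num) |>.mp this
    · have h2 : (2 : ℤ) ∣ x := by
        have hdvd : (2 : ℤ) ∣ x ^ 2 := ⟨y ^ 2, h⟩
        exact (Int.prime_two).dvd_of_dvd_pow hdvd
      obtain ⟨z, rfl⟩ := h2
      have hz : z ≠ 0 := by rintro rfl; simp at hx
      have h' : y ^ 2 = 2 * z ^ 2 := by nlinarith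
      have hzpos : 0 < z ^ 2 := by positivity
      have hsq : y ^ 2 < (2 * z) ^ 2 := by nlinarith
      have hlt : y.natAbs < (2 * z).natAbs := by
        have : (y.natAbs : ℤ) ^ 2 < ((2 * z).natAbs : ℤ) ^ 2 := by
          rwa [Int.natAbs_sq, Int.natAbs_sq] at *
          
        exact_mod_cast lt_of_pow_lt_pow_left₀ 2 (by positivity) this
      have hz0 : z = 0 := ih y.natAbs (hxn ▸ hlt) y z rfl h'
      exact absurd hz0 hz

private lemma sq_ne_two_sq (x y : ℤ) (hy : y ≠ 0) : x ^ 2 ≠ 2 * y ^ 2 := fun h =>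
  hy (aux_descent x.natAbs x y rfl h)

theorem stmt_6 (lam mu r s p q : ℤ)
    (hlam : lam ≠ 0) (hmu : mu ≠ 0) (hr : r ≠ 0) (hs : s ≠ 0) (hp : p ≠ 0) (hq : q ≠ 0)
    (hrs : r ≠ s) (hrs' : r ≠ -s) (hpq : p ≠ q) (hpq' : p ≠ -q)
    (h : 2 * (p ^ 2 - q ^ 2) * p * q * mu ^ 2 = (r ^ 2 - s ^ 2) * r * s * lam ^ 2) :
    let a := lam * (r ^ 2 - s ^ 2)
    let b := 2 * r * s * lam
    let c := lam * (r ^ 2 + s ^ 2)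
    let e := mu * (p ^ 2 - q ^ 2 - 2 * p * q)
    let f := mu * (p ^ 2 - q ^ 2 + 2 * p * q)
    let d := mu * (p ^ 2 + q ^ 2)
    a ^ 2 + b ^ 2 = c ^ 2 ∧ d ^ 2 = e ^ 2 + a * b ∧ f ^ 2 = d ^ 2 + a * b ∧
      a ≠ 0 ∧ b ≠ 0 ∧ c ≠ 0 ∧ d ≠ 0 ∧ e ≠ 0 ∧ f ≠ 0 := by
  intro a b c e f d
  have hrs2 : r ^ 2 - s ^ 2 ≠ 0 := by
    intro h0
    have : (r - s) * (r + s) = 0 := by ring_nf; linarith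
    rcases mul_eq_zero.mp this with h1 | h1
    · exact hrs (by linarith)
    · exact hrs' (by linarith)
  have he0 : p ^ 2 - q ^ 2 - 2 * p * q ≠ 0 := by
    intro h0
    have : (p - q) ^ 2 = 2 * q ^ 2 := by ring_nf; nlinarith
    exact sq_ne_two_sq (p - q) q hq this
  have hf0 : p ^ 2 - q ^ 2 + 2 * p * q ≠ 0 := by
    intro h0
    have : (p + q) ^ 2 = 2 * q ^ 2 := by ring_nf; nlinarith
    exact sq_ne_two_sq (p + q) q hq this
  have hd0 : p ^ 2 + q ^ 2 ≠ 0 := by positivity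
  have hc0 : r ^ 2 + s ^ 2 ≠ 0 := by positivity
  refine ⟨by ring, by simp only [a, b, d, e]; linear_combination 2 * h,
    by simp only [a, b, d, f]; linear_combination 2 * h,
    mul_ne_zero hlam hrs2, by simp [b, hr, hs, hlam],
    mul_ne_zero hlam hc0, mul_ne_zero hmu hd0, mul_ne_zero hmu he0, mul_ne_zero hmu hf0⟩
end

section
/- If positive integers a, b, c, d, e, f satisfy a² + b² = c², d² = e² + ab, f² = d² + ab, then ab is divisible by 60. -/
lemma aux8 : ∀ x y z : ZMod 8, x^2 + y^2 = z^2 →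
    (ZMod.castHom (by norm_num : (4:ℕ) ∣ 8) (ZMod 4)) (x*y) = 0 := by decide

lemma aux3 : ∀ x y z : ZMod 3, x^2 + y^2 = z^2 → x*y = 0 := by decide

lemma aux5 : ∀ x y z d e f : ZMod 5, x^2 + y^2 = z^2 → d^2 = e^2 + x*y →
    f^2 = d^2 + x*y → x*y = 0 := by decide

theorem stmt_7 (a b c d e f : ℕ) (ha : 0 < a) (hb : 0 < b) (hc : 0 < c)
    (hd : 0 < d) (he : 0 < e) (hf : 0 < f)
    (h1 : a ^ 2 + b ^ 2 = c ^ 2) (h2 : d ^ 2 = e ^ 2 + a * b)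
    (h3 : f ^ 2 = d ^ 2 + a * b) : 60 ∣ a * b := by
  have h4 : (4:ℕ) ∣ a * b := by
    have h1' : ((a : ZMod 8))^2 + (b : ZMod 8)^2 = (c : ZMod 8)^2 := by
      have := congrArg (Nat.cast (R := ZMod 8)) h1; push_cast at this; exact this
    have := aux8 a b c h1'
    rw [show ((a : ZMod 8) * b) = ((a*b : ℕ) : ZMod 8) by push_cast; ring,
      map_natCast] at this
    exact (ZMod.natCast_eq_zero_iff _ _).mp this
  have h3' : (3:ℕ) ∣ a * b := by
    have h1' : ((a : ZMod 3))^2 + (b : ZMod 3)^2 = (c : ZMod 3)^2 := by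
      have := congrArg (Nat.cast (R := ZMod 3)) h1; push_cast at this; exact this
    have := aux3 a b c h1'
    rw [show ((a : ZMod 3) * b) = ((a*b : ℕ) : ZMod 3) by push_cast; ring] at this
    exact (ZMod.natCast_eq_zero_iff _ _).mp this
  have h5 : (5:ℕ) ∣ a * b := by
    have e1 : ((a : ZMod 5))^2 + (b : ZMod 5)^2 = (c : ZMod 5)^2 := by
      have := congrArg (Nat.cast (R := ZMod 5)) h1; push_cast at this; exact this
    have e2 : ((d : ZMod 5))^2 = (e : ZMod 5)^2 + (a : ZMod 5) * b := by
      have := congrArg (Nat.cast (R := ZMod 5)) h2; push_cast at this; exact this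
    have e3 : ((f : ZMod 5))^2 = (d : ZMod 5)^2 + (a : ZMod 5) * b := by
      have := congrArg (Nat.cast (R := ZMod 5)) h3; push_cast at this; exact this
    have := aux5 a b c d e f e1 e2 e3
    rw [show ((a : ZMod 5) * b) = ((a*b : ℕ) : ZMod 5) by push_cast; ring] at this
    exact (ZMod.natCast_eq_zero_iff _ _).mp this
  omega
end

section
/- Up to swapping a and b, and swapping e with -e, the only positive integer solution to a² + b² = c², d² = e² + ab, f² = d² + ab with ab = 120 is (a, b, c, d, e, f) = (8, 15, 17, 13, 7, 17). -/
set_option maxRecDepth 100000 in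
set_option synthInstance.maxSize 4000 in
set_option synthInstance.maxHeartbeats 1000000 in
set_option maxHeartbeats 1000000 in
theorem stmt_10 (a b c d e f : ℕ) (ha : 0 < a) (hb : 0 < b) (hc : 0 < c)
    (hd : 0 < d) (he : 0 < e) (hf : 0 < f)
    (h1 : a ^ 2 + b ^ 2 = c ^ 2) (h2 : d ^ 2 = e ^ 2 + a * b)
    (h3 : f ^ 2 = d ^ 2 + a * b) (hab : a * b = 120) :
    ((a = 8 ∧ b = 15) ∨ (a = 15 ∧ b = 8)) ∧ c = 17 ∧ d = 13 ∧ e = 7 ∧ f = 17 := by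
  rw [hab] at h2 h3
  have hA : a < 121 := by nlinarith
  have hB : b < 121 := by nlinarith
  have hC : c < 171 := by nlinarith
  have hed : e < d := by
    by_contra h
    push_neg at h
    have := Nat.pow_le_pow_left h 2
    omega
  have hD : d < 61 := by nlinarith
  have hE : e < 60 := by omega
  have hF : f < 62 := by nlinarith
  have key1 : ∀ a < 121, ∀ b < 121, a * b = 120 →
      (a = 1 ∧ b = 120) ∨ (a = 2 ∧ b = 60) ∨ (a = 3 ∧ b = 40) ∨ (a = 4 ∧ b = 30) ∨
      (a = 5 ∧ b = 24) ∨ (a = 6 ∧ b = 20) ∨ (a = 8 ∧ b = 15) ∨ (a = 10 ∧ b = 12) ∨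
      (a = 12 ∧ b = 10) ∨ (a = 15 ∧ b = 8) ∨ (a = 20 ∧ b = 6) ∨ (a = 24 ∧ b = 5) ∨
      (a = 30 ∧ b = 4) ∨ (a = 40 ∧ b = 3) ∨ (a = 60 ∧ b = 2) ∨ (a = 120 ∧ b = 1) := by decide
  have key2 : ∀ e < 60, ∀ d < 61, d ^ 2 = e ^ 2 + 120 →
      (d = 31 ∧ e = 29) ∨ (d = 17 ∧ e = 13) ∨ (d = 13 ∧ e = 7) ∨ (d = 11 ∧ e = 1) := by decide
  have hdef : d = 13 ∧ e = 7 ∧ f = 17 := by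
    rcases key2 e hE d hD h2 with ⟨rfl, rfl⟩ | ⟨rfl, rfl⟩ | ⟨rfl, rfl⟩ | ⟨rfl, rfl⟩
    · exact absurd h3 ((by decide : ∀ f < 62, ¬ f ^ 2 = 31 ^ 2 + 120) f hF)
    · exact absurd h3 ((by decide : ∀ f < 62, ¬ f ^ 2 = 17 ^ 2 + 120) f hF)
    · exact ⟨rfl, rfl, (by decide : ∀ f < 62, f ^ 2 = 13 ^ 2 + 120 → f = 17) f hF h3⟩
    · exact absurd h3 ((by decide : ∀ f < 62, ¬ f ^ 2 = 11 ^ 2 + 120) f hF)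
  have habc : ((a = 8 ∧ b = 15) ∨ (a = 15 ∧ b = 8)) ∧ c = 17 := by
    rcases key1 a hA b hB hab with ⟨rfl, rfl⟩ | ⟨rfl, rfl⟩ | ⟨rfl, rfl⟩ | ⟨rfl, rfl⟩ |
      ⟨rfl, rfl⟩ | ⟨rfl, rfl⟩ | ⟨rfl, rfl⟩ | ⟨rfl, rfl⟩ | ⟨rfl, rfl⟩ | ⟨rfl, rfl⟩ |
      ⟨rfl, rfl⟩ | ⟨rfl, rfl⟩ | ⟨rfl, rfl⟩ | ⟨rfl, rfl⟩ | ⟨rfl, rfl⟩ | ⟨rfl, rfl⟩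
    · exact absurd h1 ((by decide : ∀ c < 171, ¬ 1 ^ 2 + 120 ^ 2 = c ^ 2) c hC)
    · exact absurd h1 ((by decide : ∀ c < 171, ¬ 2 ^ 2 + 60 ^ 2 = c ^ 2) c hC)
    · exact absurd h1 ((by decide : ∀ c < 171, ¬ 3 ^ 2 + 40 ^ 2 = c ^ 2) c hC)
    · exact absurd h1 ((by decide : ∀ c < 171, ¬ 4 ^ 2 + 30 ^ 2 = c ^ 2) c hC)
    · exact absurd h1 ((by decide : ∀ c < 171, ¬ 5 ^ 2 + 24 ^ 2 = c ^ 2) c hC)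
    · exact absurd h1 ((by decide : ∀ c < 171, ¬ 6 ^ 2 + 20 ^ 2 = c ^ 2) c hC)
    · exact ⟨Or.inl ⟨rfl, rfl⟩, (by decide : ∀ c < 171, 8 ^ 2 + 15 ^ 2 = c ^ 2 → c = 17) c hC h1⟩
    · exact absurd h1 ((by decide : ∀ c < 171, ¬ 10 ^ 2 + 12 ^ 2 = c ^ 2) c hC)
    · exact absurd h1 ((by decide : ∀ c < 171, ¬ 12 ^ 2 + 10 ^ 2 = c ^ 2) c hC)
    · exact ⟨Or.inr ⟨rfl, rfl⟩, (by decide : ∀ c < 171, 15 ^ 2 + 8 ^ 2 = c ^ 2 → c = 17) c hC h1⟩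
    · exact absurd h1 ((by decide : ∀ c < 171, ¬ 20 ^ 2 + 6 ^ 2 = c ^ 2) c hC)
    · exact absurd h1 ((by decide : ∀ c < 171, ¬ 24 ^ 2 + 5 ^ 2 = c ^ 2) c hC)
    · exact absurd h1 ((by decide : ∀ c < 171, ¬ 30 ^ 2 + 4 ^ 2 = c ^ 2) c hC)
    · exact absurd h1 ((by decide : ∀ c < 171, ¬ 40 ^ 2 + 3 ^ 2 = c ^ 2) c hC)
    · exact absurd h1 ((by decide : ∀ c < 171, ¬ 60 ^ 2 + 2 ^ 2 = c ^ 2) c hC)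
    · exact absurd h1 ((by decide : ∀ c < 171, ¬ 120 ^ 2 + 1 ^ 2 = c ^ 2) c hC)
  exact ⟨habc.1, habc.2, hdef.1, hdef.2.1, hdef.2.2⟩
end

section
/- There are infinitely many positive integer solutions (a, b, c, d, e, f) to the system a² + b² = c², d² = e² + ab, f² = d² + ab, pairwise distinct up to scaling (i.e., the ratios a/b take infinitely many distinct values among the solutions). -/
set_option maxHeartbeats 1000000

private def aN (s : ℕ) : ℕ := 48 * (s+1)^4 * (4 * (s+1)^4 + 1)
private def bN (s : ℕ) : ℕ := 2 * ((8 * (s+1)^4 - 1) * (16 * (s+1)^4 + 1))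

private lemma one_le_u (s : ℕ) : 1 ≤ (s+1)^4 := Nat.one_le_pow _ _ (Nat.succ_pos s)

private lemma bN_cast (s : ℕ) :
    (bN s : ℚ) = 2 * ((8 * ((s:ℚ)+1)^4 - 1) * (16 * ((s:ℚ)+1)^4 + 1)) := by
  have h := one_le_u s
  unfold bN
  push_cast [Nat.cast_sub (by linarith : 1 ≤ 8 * (s+1)^4)]
  ring

private lemma aN_cast (s : ℕ) :
    (aN s : ℚ) = 48 * ((s:ℚ)+1)^4 * (4 * ((s:ℚ)+1)^4 + 1) := by
  unfold aN; push_cast; ring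

private lemma ratio_ineq {U V : ℚ} (hU1 : 1 ≤ U) (hUV : U < V) :
    48*V*(4*V+1) * (2*((8*U-1)*(16*U+1))) < 48*U*(4*U+1) * (2*((8*V-1)*(16*V+1))) := by
  have key : 48*U*(4*U+1) * (2*((8*V-1)*(16*V+1)))
      - 48*V*(4*V+1) * (2*((8*U-1)*(16*U+1)))
      = 96*((V-U)*(160*U*V + 4*U + 4*V + 1)) := by ring
  nlinarith [mul_pos (sub_pos.mpr hUV)
    (by nlinarith : (0:ℚ) < 160*U*V + 4*U + 4*V + 1)]

private lemma bN_pos_q (s : ℕ) : 0 < (bN s : ℚ) := by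
  rw [bN_cast]
  have h : (1:ℚ) ≤ ((s:ℚ)+1)^4 := by
    have := one_le_u s
    exact_mod_cast Nat.one_le_cast.mpr this |>.trans_eq (by push_cast; ring)
  nlinarith

theorem stmt_17 :
    {x : ℚ | ∃ a b c d e f : ℕ, 0 < a ∧ 0 < b ∧ 0 < c ∧ 0 < d ∧ 0 < e ∧ 0 < f ∧
      a ^ 2 + b ^ 2 = c ^ 2 ∧ d ^ 2 = e ^ 2 + a * b ∧ f ^ 2 = d ^ 2 + a * b ∧
      x = (a : ℚ) / b}.Infinite := by
  apply Set.infinite_of_injective_forall_mem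
    (f := fun s : ℕ => (aN s : ℚ) / (bN s))
  case hi =>
    -- injectivity via strict antitonicity
    have anti : StrictAnti (fun s : ℕ => (aN s : ℚ) / (bN s)) := by
      intro s t hst
      simp only
      rw [div_lt_div_iff₀ (bN_pos_q t) (bN_pos_q s), aN_cast, aN_cast, bN_cast, bN_cast]
      have hU1 : (1:ℚ) ≤ ((s:ℚ)+1)^4 := by
        have hs : (1:ℚ) ≤ (s:ℚ)+1 := by linarith [Nat.cast_nonneg (α := ℚ) s]
        calc (1:ℚ) = 1^4 := by norm_num
        _ ≤ ((s:ℚ)+1)^4 := by gcongr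
      have hUV : ((s:ℚ)+1)^4 < ((t:ℚ)+1)^4 := by
        have h1 : (s:ℚ)+1 < (t:ℚ)+1 := by exact_mod_cast Nat.succ_lt_succ hst
        have h0 : (0:ℚ) ≤ (s:ℚ)+1 := by positivity
        exact pow_lt_pow_left₀ h1 h0 (by norm_num)
      exact ratio_ineq hU1 hUV
    exact anti.injective
  case hf =>
    intro s
    have h1 : 1 ≤ (s+1)^4 := one_le_u s
    have h2 : (s+1)^4 ≤ (s+1)^8 := Nat.pow_le_pow_right (Nat.succ_pos s) (by norm_num)
    refine ⟨aN s, bN s,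
      320 * (s+1)^8 + 16 * (s+1)^4 + 2,
      2 * (s+1)^2 * (128 * (s+1)^8 + 16 * (s+1)^4 + 5),
      2 * (s+1)^2 * (128 * (s+1)^8 - (32 * (s+1)^4 + 7)),
      2 * (s+1)^2 * (128 * (s+1)^8 + (64 * (s+1)^4 - 1)),
      ?_, ?_, ?_, ?_, ?_, ?_, ?_, ?_, ?_, rfl⟩
    · unfold aN; positivity
    · unfold bN
      have : 0 < 8 * (s+1)^4 - 1 := by omega
      positivity
    · positivity
    · positivity
    · have : 0 < 128 * (s+1)^8 - (32 * (s+1)^4 + 7) := by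
        have : (s+1)^4 * 1 ≤ (s+1)^4 * (s+1)^4 := Nat.mul_le_mul_left _ h1
        have hsq : (s+1)^4 * (s+1)^4 = (s+1)^8 := by ring
        omega
      positivity
    · have : 0 < 64 * (s+1)^4 - 1 := by omega
      positivity
    · -- a^2 + b^2 = c^2
      unfold aN bN
      have hb : 1 ≤ 8 * (s+1)^4 := by omega
      zify [hb]
      have h8 : ((s:ℤ)+1)^4 * ((s:ℤ)+1)^4 = ((s:ℤ)+1)^8 := by ring
      ring
    · -- d^2 = e^2 + a*b
      unfold aN bN
      have hb : 1 ≤ 8 * (s+1)^4 := by omega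
      have he : 32 * (s+1)^4 + 7 ≤ 128 * (s+1)^8 := by
        have : (s+1)^4 * 1 ≤ (s+1)^4 * (s+1)^4 := Nat.mul_le_mul_left _ h1
        have hsq : (s+1)^4 * (s+1)^4 = (s+1)^8 := by ring
        omega
      zify [hb, he]
      ring
    · -- f^2 = d^2 + a*b
      unfold aN bN
      have hb : 1 ≤ 8 * (s+1)^4 := by omega
      have hf : 1 ≤ 64 * (s+1)^4 := by omega
      zify [hb, hf]
      ring
end

section
/- For the solution family with a = 48n⁴(4n⁴ + 1), b = 2(8n⁴ - 1)(16n⁴ + 1), e = 2n²(128n⁸ - 32n⁴ - 7), f = 2n²(128n⁸ + 64n⁴ - 1), the quantity h² = (e² + f² - a² - b²)/2 equals 2(2n⁴ - 1)(8n⁴ - 1)(32n⁴ - 1)(64n⁸ + 8n⁴ + 1), which is positive for every integer n ≥ 1. -/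
theorem stmt_18 (n : ℤ) (hn : 1 ≤ n) :
    let a := 48 * n ^ 4 * (4 * n ^ 4 + 1)
    let b := 2 * (8 * n ^ 4 - 1) * (16 * n ^ 4 + 1)
    let e := 2 * n ^ 2 * (128 * n ^ 8 - 32 * n ^ 4 - 7)
    let f := 2 * n ^ 2 * (128 * n ^ 8 + 64 * n ^ 4 - 1)
    (e ^ 2 + f ^ 2 - a ^ 2 - b ^ 2) / 2
        = 2 * (2 * n ^ 4 - 1) * (8 * n ^ 4 - 1) * (32 * n ^ 4 - 1) *
            (64 * n ^ 8 + 8 * n ^ 4 + 1) ∧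
      0 < 2 * (2 * n ^ 4 - 1) * (8 * n ^ 4 - 1) * (32 * n ^ 4 - 1) *
            (64 * n ^ 8 + 8 * n ^ 4 + 1) := by
  intro a b e f
  have hn4 : 1 ≤ n ^ 4 := one_le_pow₀ hn
  constructor
  · have h : e ^ 2 + f ^ 2 - a ^ 2 - b ^ 2 =
      2 * (2 * (2 * n ^ 4 - 1) * (8 * n ^ 4 - 1) * (32 * n ^ 4 - 1) *
        (64 * n ^ 8 + 8 * n ^ 4 + 1)) := by
      simp only [a, b, e, f]; ring
    rw [h, Int.mul_ediv_cancel_left _ (by norm_num)]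
  · have h8 : 1 ≤ n ^ 8 := one_le_pow₀ hn
    have h1 : (0:ℤ) < 2 * (2 * n ^ 4 - 1) := by linarith
    have h2 : (0:ℤ) < 8 * n ^ 4 - 1 := by linarith
    have h3 : (0:ℤ) < 32 * n ^ 4 - 1 := by linarith
    have h4 : (0:ℤ) < 64 * n ^ 8 + 8 * n ^ 4 + 1 := by linarith
    exact mul_pos (mul_pos (mul_pos h1 h2) h3) h4
end

section
/- If positive integers a, b, c, d, e, f satisfy a² + b² = c², d² = e² + ab, f² = d² + ab, and ab is not divisible by 5, then a contradiction follows; equivalently 5 divides ab. -/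
theorem stmt_19 (a b c d e f : ℕ) (ha : 0 < a) (hb : 0 < b) (hc : 0 < c)
    (hd : 0 < d) (he : 0 < e) (hf : 0 < f)
    (h1 : a ^ 2 + b ^ 2 = c ^ 2) (h2 : d ^ 2 = e ^ 2 + a * b)
    (h3 : f ^ 2 = d ^ 2 + a * b) : 5 ∣ a * b := by
  have key : ∀ A B C D E F : ZMod 5, A ^ 2 + B ^ 2 = C ^ 2 →
      D ^ 2 = E ^ 2 + A * B → F ^ 2 = D ^ 2 + A * B → A * B = 0 := by decide
  have H1 : (a : ZMod 5) ^ 2 + (b : ZMod 5) ^ 2 = (c : ZMod 5) ^ 2 := by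
    exact_mod_cast congrArg (Nat.cast : ℕ → ZMod 5) h1
  have H2 : (d : ZMod 5) ^ 2 = (e : ZMod 5) ^ 2 + (a : ZMod 5) * b := by
    exact_mod_cast congrArg (Nat.cast : ℕ → ZMod 5) h2
  have H3 : (f : ZMod 5) ^ 2 = (d : ZMod 5) ^ 2 + (a : ZMod 5) * b := by
    exact_mod_cast congrArg (Nat.cast : ℕ → ZMod 5) h3
  have := key a b c d e f H1 H2 H3
  have : ((a * b : ℕ) : ZMod 5) = 0 := by push_cast; exact this
  exact (ZMod.natCast_eq_zero_iff _ _).mp this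
end
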